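/- Consider the transverse system ė = F(e,x), ẋ = G(e,x). Assume Property ULMTE holds: there exist a symmetric positive definite matrix Q in ℝ^{n_e×n_e}, a C¹ function P : ℝ^{n_x} → ℝ^{n_e×n_e} taking symmetric values and strictly positive real numbers p̲, p̄ such that 𝔡_{G̃}P(x) + P(x)(∂F/∂e)(0,x) + (∂F/∂e)(0,x)ᵀP(x) ≤ −Q and p̲ I ≤ P(x) ≤ p̄ I for all x, where 𝔡_{G̃}P(x) := lim_{h→0} (P(X̃(x,h)) − P(x))/h and G̃(x) := G(0,x). Assume moreover that there exist positive real numbers η and c such that |∂P/∂x(x)| ≤ c for all x, and for all (e,x) with |e| ≤ η, |∂²F/∂e∂e(e,x)| ≤ c, |∂²F/∂x∂e(e,x)| ≤ c and |∂G/∂e(e,x)| ≤ c. Then Property TULES-NL holds: there exist strictly positive real numbers r, k, λ such that |E(e₀,x₀,t)| ≤ k |e₀| exp(−λ t) for all (e₀,x₀,t) in ℝ^{n_e}×ℝ^{n_x}×ℝ₊ with |e₀| ≤ r. -/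

import Mathlib

/-!
`V(e, x) = ⟪P(x) e, e⟫` is a local Lyapunov function for the transverse dynamics. Along solutions
`V̇ = ⟪∂P/∂x(x) G(e, x) e, e⟫ + 2 ⟪P(x) F(e, x), e⟫`. Writing `F(e, x) = ∂F/∂e(0, x) e + O(|e|²)`
and `G(e, x) = G̃(x) + O(|e|)`, with constants uniform in `x` by the bounds on the second
derivatives, ULMTE gives `V̇ ≤ -q |e|² + C |e|³ ≤ -(q / 2p̄) V` on a ball `|e| ≤ δ`. Grönwall's
inequality bounds `V` while the solution stays in that ball, and a continuity argument shows that
it never leaves it once `p̄ |e₀|² < p̲ δ²`. Since `p̲ |e|² ≤ V ≤ p̄ |e|²`, the decay of `V` is the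
claim.
-/

open Real Set Filter
open scoped RealInnerProductSpace Topology

/-- Euclidean state space ℝⁿ. -/
abbrev Euc (n : ℕ) := EuclideanSpace ℝ (Fin n)

section InnerProduct

variable {E : Type*} [NormedAddCommGroup E] [InnerProductSpace ℝ E]

theorem exists_pos_mul_norm_sq_le_inner_apply_self [FiniteDimensional ℝ E] (Q : E →L[ℝ] E)
    (hQ : ∀ v, v ≠ 0 → 0 < ⟪Q v, v⟫) : ∃ q > 0, ∀ v, q * ‖v‖ ^ 2 ≤ ⟪Q v, v⟫ := by
  cases subsingleton_or_nontrivial E with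
  | inl _ => exact ⟨1, one_pos, fun v => by simp [Subsingleton.elim v 0]⟩
  | inr _ =>
    obtain ⟨u, hu, hmin⟩ := (isCompact_sphere (0 : E) 1).exists_isMinOn
      (NormedSpace.sphere_nonempty.mpr zero_le_one)
      (Q.continuous.inner (𝕜 := ℝ) continuous_id).continuousOn
    have hu1 : ‖u‖ = 1 := mem_sphere_zero_iff_norm.mp hu
    refine ⟨⟪Q u, u⟫, hQ u (norm_ne_zero_iff.mp (by simp [hu1])), fun v => ?_⟩
    rcases eq_or_ne v 0 with rfl | hv
    · simp
    have hv' : 0 < ‖v‖ := norm_pos_iff.mpr hv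
    have hmem : ‖v‖⁻¹ • v ∈ Metric.sphere (0 : E) 1 := by
      simp [norm_smul, hv'.ne']
    have hle : ⟪Q u, u⟫ ≤ ‖v‖⁻¹ * (‖v‖⁻¹ * ⟪Q v, v⟫) := by
      simpa [real_inner_smul_left, real_inner_smul_right] using hmin hmem
    calc ⟪Q u, u⟫ * ‖v‖ ^ 2 ≤ ‖v‖⁻¹ * (‖v‖⁻¹ * ⟪Q v, v⟫) * ‖v‖ ^ 2 := by gcongr
      _ = ⟪Q v, v⟫ := by field_simp

theorem norm_le_of_inner_apply_self_le {T : E →L[ℝ] E} (hT : (T : E →ₗ[ℝ] E).IsSymmetric)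
    {M : ℝ} (hM : 0 ≤ M) (h₀ : ∀ v, 0 ≤ ⟪T v, v⟫) (h : ∀ v, ⟪T v, v⟫ ≤ M * ‖v‖ ^ 2) :
    ‖T‖ ≤ M := by
  rw [T.norm_eq_iSup_rayleighQuotient hT]
  refine ciSup_le fun v => ?_
  rw [ContinuousLinearMap.rayleighQuotient, ContinuousLinearMap.reApplyInnerSelf_apply, abs_div,
    abs_sq, RCLike.re_to_real, abs_of_nonneg (h₀ v)]
  exact div_le_of_le_mul₀ (sq_nonneg _) hM (h v)

theorem HasDerivWithinAt.inner_apply_self {P : ℝ → E →L[ℝ] E} {P' : E →L[ℝ] E} {u : ℝ → E}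
    {u' : E} {s : Set ℝ} {t : ℝ} (hP : HasDerivWithinAt P P' s t) (hu : HasDerivWithinAt u u' s t)
    (hsym : (P t : E →ₗ[ℝ] E).IsSymmetric) :
    HasDerivWithinAt (fun τ => ⟪P τ (u τ), u τ⟫) (⟪P' (u t), u t⟫ + 2 * ⟪P t u', u t⟫) s t := by
  refine ((hP.clm_apply hu).inner ℝ hu).congr_deriv ?_
  have h := hsym (u t) u'
  simp only [ContinuousLinearMap.coe_coe] at h
  rw [inner_add_left, h, real_inner_comm (P t u')]
  ring

theorem inner_add_comp_add_adjoint_comp_apply_self [CompleteSpace E] (D A P : E →L[ℝ] E)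
    (hP : (P : E →ₗ[ℝ] E).IsSymmetric) (v : E) :
    ⟪(D + P ∘L A + ContinuousLinearMap.adjoint A ∘L P) v, v⟫ = ⟪D v, v⟫ + 2 * ⟪P (A v), v⟫ := by
  have h := hP v (A v)
  simp only [ContinuousLinearMap.coe_coe] at h
  rw [add_apply, add_apply, inner_add_left, inner_add_left, ContinuousLinearMap.comp_apply,
    ContinuousLinearMap.comp_apply, ContinuousLinearMap.adjoint_inner_left, h,
    real_inner_comm (P (A v)) v]
  ring

end InnerProduct

theorem eq_fderiv_apply_of_hasDerivWithinAt_comp {F G : Type*} [NormedAddCommGroup F]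
    [NormedSpace ℝ F] [NormedAddCommGroup G] [NormedSpace ℝ G] {f : F → G} {γ : ℝ → F} {v : F}
    {L : G} (hf : DifferentiableAt ℝ f (γ 0)) (hγ : HasDerivWithinAt γ v (Ici 0) 0)
    (hL : HasDerivWithinAt (fun h => f (γ h)) L (Ici 0) 0) : L = fderiv ℝ f (γ 0) v :=
  (uniqueDiffOn_Ici 0 0 self_mem_Ici).eq_deriv _ hL (hf.hasFDerivAt.comp_hasDerivWithinAt 0 hγ)

section MeanValue

variable {E F : Type*} [NormedAddCommGroup E] [NormedSpace ℝ E] [NormedAddCommGroup F]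
  [NormedSpace ℝ F] {f : E → F} {f' : E → E →L[ℝ] F} {η : ℝ}

theorem norm_sub_apply_zero_le_of_norm_fderiv_le (hf : ∀ y, ‖y‖ ≤ η → HasFDerivAt f (f' y) y)
    {C : ℝ} (hf' : ∀ y, ‖y‖ ≤ η → ‖f' y‖ ≤ C) {y : E} (hy : ‖y‖ ≤ η) :
    ‖f y - f 0‖ ≤ C * ‖y‖ := by
  simpa using Convex.norm_image_sub_le_of_norm_hasFDerivWithin_le
    (fun z hz => (hf z (mem_closedBall_zero_iff.mp hz)).hasFDerivWithinAt)
    (fun z hz => hf' z (mem_closedBall_zero_iff.mp hz)) (convex_closedBall 0 η)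
    (Metric.mem_closedBall_self ((norm_nonneg y).trans hy)) (mem_closedBall_zero_iff.mpr hy)

theorem norm_sub_sub_fderiv_zero_apply_le (hf : ∀ y, ‖y‖ ≤ η → HasFDerivAt f (f' y) y)
    {L : ℝ} (hL : 0 ≤ L) (hf' : ∀ y, ‖y‖ ≤ η → ‖f' y - f' 0‖ ≤ L * ‖y‖) {y : E} (hy : ‖y‖ ≤ η) :
    ‖f y - f 0 - f' 0 y‖ ≤ L * ‖y‖ ^ 2 := by
  have := norm_sub_apply_zero_le_of_norm_fderiv_le (f := fun z => f z - f' 0 z)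
    (fun z hz => (hf z (hz.trans hy)).sub (f' 0).hasFDerivAt)
    (fun z hz => (hf' z (hz.trans hy)).trans (mul_le_mul_of_nonneg_left hz hL)) le_rfl
  simpa [sq, mul_assoc, sub_right_comm] using this

end MeanValue

theorem le_mul_exp_of_hasDerivWithinAt_le_mul {f f' : ℝ → ℝ} {a K T : ℝ}
    (hf : ContinuousOn f (Icc 0 T)) (hf' : ∀ s ∈ Ico 0 T, HasDerivWithinAt f (f' s) (Ici s) s)
    (h0 : f 0 ≤ a) (hbound : ∀ s ∈ Ico 0 T, f' s ≤ K * f s) :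
    ∀ t ∈ Icc 0 T, f t ≤ a * exp (K * t) := by
  intro t ht
  simpa [gronwallBound_ε0] using le_gronwallBound_of_liminf_deriv_right_le (ε := 0) hf
    (fun s hs r hr => ((hf' s hs).liminf_right_slope_le hr).mono
      fun z hz => by rwa [slope_def_field, div_eq_inv_mul] at hz)
    h0 (fun s hs => by simpa using hbound s hs) t ht

theorem forall_lt_of_forall_Ico_le_imp_lt {f : ℝ → ℝ} {δ : ℝ} (hf : ContinuousOn f (Ici 0))
    (h : ∀ T ≥ 0, (∀ s ∈ Ico 0 T, f s ≤ δ) → f T < δ) : ∀ t ≥ 0, f t < δ := by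
  by_contra! ⟨t, ht, hδt⟩
  set S := Ici 0 ∩ f ⁻¹' Ici δ
  have hS : IsClosed S := hf.preimage_isClosed_of_isClosed isClosed_Ici isClosed_Ici
  obtain ⟨hT, hδT⟩ : sInf S ∈ S := hS.csInf_mem ⟨t, ht, hδt⟩ ⟨0, fun s hs => hs.1⟩
  refine (h _ hT fun s hs => ?_).not_ge hδT
  by_contra! hδs
  exact hs.2.not_ge (csInf_le ⟨0, fun s hs => hs.1⟩ ⟨hs.1, hδs.le⟩)

theorem le_mul_exp_of_deriv_le_while_small {V V' n : ℝ → ℝ} {a b μ δ : ℝ}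
    (hV : ContinuousOn V (Ici 0)) (hn : ContinuousOn n (Ici 0))
    (hV' : ∀ s ≥ 0, HasDerivWithinAt V (V' s) (Ici s) s)
    (hdecay : ∀ s ≥ 0, n s ≤ δ → V' s ≤ -μ * V s) (hnV : ∀ s, b * n s ^ 2 ≤ V s)
    (hb : 0 < b) (hμ : 0 ≤ μ) (hδ : 0 ≤ δ) (h0 : V 0 ≤ a) (ha : a < b * δ ^ 2) :
    ∀ t ≥ 0, V t ≤ a * exp (-μ * t) := by
  have decay_of_small : ∀ T ≥ 0, (∀ s ∈ Ico 0 T, n s ≤ δ) → ∀ t ∈ Icc 0 T,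
      V t ≤ a * exp (-μ * t) := fun T _ hsmall =>
    le_mul_exp_of_hasDerivWithinAt_le_mul (hV.mono fun s hs => hs.1) (fun s hs => hV' s hs.1) h0
      fun s hs => hdecay s hs.1 (hsmall s hs)
  have small : ∀ t ≥ 0, n t < δ := by
    refine forall_lt_of_forall_Ico_le_imp_lt hn fun T hT hsmall => ?_
    have hVT : V T < b * δ ^ 2 := calc
      V T ≤ a * exp (-μ * T) := decay_of_small T hT hsmall T ⟨hT, le_rfl⟩
      _ ≤ a := mul_le_of_le_one_right ((mul_nonneg hb.le (sq_nonneg _)).trans ((hnV 0).trans h0))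
        (exp_le_one_iff.mpr (mul_nonpos_of_nonpos_of_nonneg (neg_nonpos.mpr hμ) hT))
      _ < b * δ ^ 2 := ha
    exact (abs_lt_of_sq_lt_sq (lt_of_mul_lt_mul_left ((hnV T).trans_lt hVT) hb.le) hδ).trans_le'
      (le_abs_self _)
  exact fun t ht => decay_of_small t ht (fun s hs => (small s hs.1).le) t ⟨ht, le_rfl⟩

theorem lyapunov_deriv_le_of_linearization {E X : Type*} [NormedAddCommGroup E]
    [InnerProductSpace ℝ E] [NormedAddCommGroup X] [NormedSpace ℝ X] {P₀ A : E →L[ℝ] E}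
    {D : X →L[ℝ] E →L[ℝ] E} {e f : E} {g g₀ : X} {pu c q : ℝ} (hpu : 0 < pu) (hq : 0 ≤ q)
    (hP₀ : ‖P₀‖ ≤ pu) (hP₀e : ⟪P₀ e, e⟫ ≤ pu * ‖e‖ ^ 2) (hD : ‖D‖ ≤ c)
    (hf : ‖f - A e‖ ≤ c * ‖e‖ ^ 2) (hg : ‖g - g₀‖ ≤ c * ‖e‖)
    (hlin : ⟪D g₀ e, e⟫ + 2 * ⟪P₀ (A e), e⟫ ≤ -q * ‖e‖ ^ 2)
    (hsmall : (c ^ 2 + 2 * pu * c) * ‖e‖ ≤ q / 2) :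
    ⟪D g e, e⟫ + 2 * ⟪P₀ f, e⟫ ≤ -(q / (2 * pu)) * ⟪P₀ e, e⟫ := by
  have hc : 0 ≤ c := (norm_nonneg D).trans hD
  have hDg : ⟪D (g - g₀) e, e⟫ ≤ c ^ 2 * ‖e‖ ^ 3 := calc
    _ ≤ ‖D‖ * ‖g - g₀‖ * ‖e‖ * ‖e‖ :=
      (real_inner_le_norm _ _).trans (by gcongr; exact D.le_opNorm₂ _ _)
    _ ≤ c * (c * ‖e‖) * ‖e‖ * ‖e‖ := by gcongr
    _ = c ^ 2 * ‖e‖ ^ 3 := by ring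
  have hPf : ⟪P₀ (f - A e), e⟫ ≤ pu * c * ‖e‖ ^ 3 := calc
    _ ≤ ‖P₀‖ * ‖f - A e‖ * ‖e‖ :=
      (real_inner_le_norm _ _).trans (by gcongr; exact P₀.le_opNorm _)
    _ ≤ pu * (c * ‖e‖ ^ 2) * ‖e‖ := by gcongr
    _ = pu * c * ‖e‖ ^ 3 := by ring
  have hcubic : (c ^ 2 + 2 * pu * c) * ‖e‖ ^ 3 ≤ q / 2 * ‖e‖ ^ 2 := calc
    _ = (c ^ 2 + 2 * pu * c) * ‖e‖ * ‖e‖ ^ 2 := by ring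
    _ ≤ q / 2 * ‖e‖ ^ 2 := by gcongr
  have hquad : -(q / 2) * ‖e‖ ^ 2 ≤ -(q / (2 * pu)) * ⟪P₀ e, e⟫ := by
    have := mul_le_mul_of_nonneg_left hP₀e (div_nonneg hq (by positivity : (0 : ℝ) ≤ 2 * pu))
    field_simp at this ⊢
    linarith
  simp only [map_sub, sub_apply, inner_sub_left] at hDg hPf
  linarith

theorem exists_pos_forall_lyapunov_deriv_le {E X : Type*} [NormedAddCommGroup E]
    [InnerProductSpace ℝ E] [NormedAddCommGroup X] [NormedSpace ℝ X] {f : E × X → E}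
    {g : E × X → X} {P : X → E →L[ℝ] E} {A : X → E →L[ℝ] E} {pu c q η : ℝ} (hpu : 0 < pu)
    (hc : 0 < c) (hq : 0 < q) (hη : 0 < η) (hPnorm : ∀ x, ‖P x‖ ≤ pu)
    (hPbnd : ∀ x v, ⟪P x v, v⟫ ≤ pu * ‖v‖ ^ 2) (hdP : ∀ x, ‖fderiv ℝ P x‖ ≤ c)
    (hf : ∀ e x, ‖e‖ ≤ η → ‖f (e, x) - A x e‖ ≤ c * ‖e‖ ^ 2)
    (hg : ∀ e x, ‖e‖ ≤ η → ‖g (e, x) - g (0, x)‖ ≤ c * ‖e‖)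
    (hlin : ∀ x v, ⟪fderiv ℝ P x (g (0, x)) v, v⟫ + 2 * ⟪P x (A x v), v⟫ ≤ -q * ‖v‖ ^ 2) :
    ∃ δ > 0, ∀ e x, ‖e‖ ≤ δ →
      ⟪fderiv ℝ P x (g (e, x)) e, e⟫ + 2 * ⟪P x (f (e, x)), e⟫ ≤ -(q / (2 * pu)) * ⟪P x e, e⟫ := by
  refine ⟨min η (q / (2 * (c ^ 2 + 2 * pu * c))), lt_min hη (by positivity), fun e x he => ?_⟩
  have heη := he.trans (min_le_left _ _)
  have hsmall := (le_div_iff₀ (by positivity)).mp (he.trans (min_le_right _ _))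
  exact lyapunov_deriv_le_of_linearization hpu hq.le (hPnorm x) (hPbnd x e) (hdP x) (hf e x heη)
    (hg e x heη) (hlin x e) (by linarith)

theorem norm_le_mul_exp_of_lyapunov {E X : Type*} [NormedAddCommGroup E] [InnerProductSpace ℝ E]
    [NormedAddCommGroup X] [NormedSpace ℝ X] {f : E × X → E} {g : E × X → X} {P : X → E →L[ℝ] E}
    {pl pu δ μ : ℝ} (hP : Differentiable ℝ P) (hPsym : ∀ x, (P x : E →ₗ[ℝ] E).IsSymmetric)
    (hPbnd : ∀ x v, pl * ‖v‖ ^ 2 ≤ ⟪P x v, v⟫ ∧ ⟪P x v, v⟫ ≤ pu * ‖v‖ ^ 2)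
    (hpl : 0 < pl) (hpu : 0 < pu) (hδ : 0 < δ) (hμ : 0 ≤ μ)
    (hdecay : ∀ e x, ‖e‖ ≤ δ →
      ⟪fderiv ℝ P x (g (e, x)) e, e⟫ + 2 * ⟪P x (f (e, x)), e⟫ ≤ -μ * ⟪P x e, e⟫)
    {e : ℝ → E} {x : ℝ → X}
    (he : ∀ t ≥ 0, HasDerivWithinAt e (f (e t, x t)) (Ici 0) t)
    (hx : ∀ t ≥ 0, HasDerivWithinAt x (g (e t, x t)) (Ici 0) t)
    (he₀ : ‖e 0‖ ≤ √(pl / pu) * δ / 2) {t : ℝ} (ht : 0 ≤ t) :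
    ‖e t‖ ≤ √(pu / pl) * ‖e 0‖ * exp (-(μ / 2) * t) := by
  have he_cont : ContinuousOn e (Ici 0) := fun s hs => (he s hs).continuousWithinAt
  have hx_cont : ContinuousOn x (Ici 0) := fun s hs => (hx s hs).continuousWithinAt
  have he₀_sq : pu * ‖e 0‖ ^ 2 < pl * δ ^ 2 := calc
    pu * ‖e 0‖ ^ 2 ≤ pu * (√(pl / pu) * δ / 2) ^ 2 := by gcongr
    _ = pl * δ ^ 2 / 4 := by rw [div_pow, mul_pow, sq_sqrt (by positivity)]; field_simp; ring
    _ < pl * δ ^ 2 := by linarith [mul_pos hpl (pow_pos hδ 2)]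
  have hV : pl * ‖e t‖ ^ 2 ≤ pu * ‖e 0‖ ^ 2 * exp (-μ * t) :=
    (hPbnd _ _).1.trans <| le_mul_exp_of_deriv_le_while_small
      (((hP.continuous.comp_continuousOn hx_cont).clm_apply he_cont).inner he_cont)
      he_cont.norm
      (fun s hs => (((hP (x s)).hasFDerivAt.comp_hasDerivWithinAt s (hx s hs)).inner_apply_self
        (he s hs) (hPsym _)).mono (Ici_subset_Ici.mpr hs))
      (fun s _ hs => hdecay _ _ hs) (fun s => (hPbnd _ _).1) hpl hμ hδ.le
      (hPbnd _ _).2 he₀_sq t ht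
  have hexp : exp (-(μ / 2) * t) ^ 2 = exp (-μ * t) := by
    rw [sq, ← exp_add]
    ring_nf
  refine (pow_le_pow_iff_left₀ (norm_nonneg _) (by positivity) two_ne_zero).mp ?_
  rw [mul_pow, mul_pow, sq_sqrt (by positivity), hexp, div_mul_eq_mul_div, div_mul_eq_mul_div,
    le_div_iff₀ hpl]
  linarith

theorem fact3_transverse_local
    {ne nx : ℕ}
    (F : Euc ne × Euc nx → Euc ne) (G : Euc ne × Euc nx → Euc nx)
    (hF0 : ∀ x, F (0, x) = 0)
    -- partial derivatives of F and G
    (dFe : Euc ne → Euc nx → Euc ne →L[ℝ] Euc ne)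
    (hdFe : ∀ e x, HasFDerivAt (fun e' => F (e', x)) (dFe e x) e)
    (dGe : Euc ne → Euc nx → Euc ne →L[ℝ] Euc nx)
    (hdGe : ∀ e x, HasFDerivAt (fun e' => G (e', x)) (dGe e x) e)
    (dFee : Euc ne → Euc nx → Euc ne →L[ℝ] Euc ne →L[ℝ] Euc ne)
    (hdFee : ∀ e x, HasFDerivAt (fun e' => dFe e' x) (dFee e x) e)
    (dFxe : Euc ne → Euc nx → Euc nx →L[ℝ] Euc ne →L[ℝ] Euc ne)
    -- forward complete flow of the nonlinear system
    (Efl : Euc ne → Euc nx → ℝ → Euc ne) (Xfl : Euc ne → Euc nx → ℝ → Euc nx)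
    (hinit : ∀ e x, Efl e x 0 = e ∧ Xfl e x 0 = x)
    (hflow : ∀ e x t, 0 ≤ t →
      HasDerivWithinAt (Efl e x) (F (Efl e x t, Xfl e x t)) (Ici 0) t ∧
      HasDerivWithinAt (Xfl e x) (G (Efl e x t, Xfl e x t)) (Ici 0) t)
    -- flow X̃ of ẋ = G̃(x) := G(0,x)
    (Xt : Euc nx → ℝ → Euc nx)
    (hXt0 : ∀ x, Xt x 0 = x)
    (hXt : ∀ x t, 0 ≤ t → HasDerivWithinAt (Xt x) (G (0, Xt x t)) (Ici 0) t)
    -- Property ULMTE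
    (Q : Euc ne →L[ℝ] Euc ne)
    (hQpos : ∀ v, v ≠ 0 → 0 < ⟪Q v, v⟫)
    (P : Euc nx → Euc ne →L[ℝ] Euc ne) (hP : ContDiff ℝ 1 P)
    (hPsa : ∀ x, IsSelfAdjoint (P x))
    (dP : Euc nx → Euc ne →L[ℝ] Euc ne)
    (hdP : ∀ x, HasDerivWithinAt (fun h => P (Xt x h)) (dP x) (Ici 0) 0)
    (hULMTE : ∀ x v, ⟪(dP x + P x ∘L dFe 0 x +
        ContinuousLinearMap.adjoint (dFe 0 x) ∘L P x) v, v⟫ ≤ -⟪Q v, v⟫)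
    (pl pu : ℝ) (hpl : 0 < pl) (hpu : 0 < pu)
    (hPbnd : ∀ x v, pl * ‖v‖ ^ 2 ≤ ⟪P x v, v⟫ ∧ ⟪P x v, v⟫ ≤ pu * ‖v‖ ^ 2)
    -- bounds on ∂P/∂x and on the second derivatives
    (η c : ℝ) (hη : 0 < η) (hc : 0 < c)
    (hdPbnd : ∀ x, ‖fderiv ℝ P x‖ ≤ c)
    (hbnd2 : ∀ e x, ‖e‖ ≤ η → ‖dFee e x‖ ≤ c ∧ ‖dFxe e x‖ ≤ c ∧ ‖dGe e x‖ ≤ c) :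
    -- Property TULES-NL
    ∃ r > (0:ℝ), ∃ k > (0:ℝ), ∃ lam > (0:ℝ),
      ∀ e x t, 0 ≤ t → ‖e‖ ≤ r → ‖Efl e x t‖ ≤ k * ‖e‖ * exp (-lam * t) := by
  have hPsym : ∀ x, (P x : Euc ne →ₗ[ℝ] Euc ne).IsSymmetric := fun x => (hPsa x).isSymmetric
  have hPnorm : ∀ x, ‖P x‖ ≤ pu := fun x => norm_le_of_inner_apply_self_le (hPsym x) hpu.le
    (fun v => (by positivity : 0 ≤ pl * ‖v‖ ^ 2).trans (hPbnd x v).1) (fun v => (hPbnd x v).2)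
  obtain ⟨q, hq, hQq⟩ := exists_pos_mul_norm_sq_le_inner_apply_self Q hQpos
  have hlin : ∀ x v, ⟪fderiv ℝ P x (G (0, x)) v, v⟫ + 2 * ⟪P x (dFe 0 x v), v⟫ ≤ -q * ‖v‖ ^ 2 := by
    intro x v
    have hdP_eq : dP x = fderiv ℝ P x (G (0, x)) := by
      simpa [hXt0] using eq_fderiv_apply_of_hasDerivWithinAt_comp
        ((hP.differentiable one_ne_zero) (Xt x 0)) (hXt x 0 le_rfl) (hdP x)
    have := hULMTE x v
    rw [inner_add_comp_add_adjoint_comp_apply_self _ _ _ (hPsym x), hdP_eq] at this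
    linarith [hQq v]
  have hG : ∀ e x, ‖e‖ ≤ η → ‖G (e, x) - G (0, x)‖ ≤ c * ‖e‖ := fun e x he =>
    norm_sub_apply_zero_le_of_norm_fderiv_le (fun y _ => hdGe y x)
      (fun y hy => (hbnd2 y x hy).2.2) he
  have hF : ∀ e x, ‖e‖ ≤ η → ‖F (e, x) - dFe 0 x e‖ ≤ c * ‖e‖ ^ 2 := fun e x he => by
    simpa [hF0] using norm_sub_sub_fderiv_zero_apply_le (fun y _ => hdFe y x) hc.le
      (fun y hy => norm_sub_apply_zero_le_of_norm_fderiv_le (fun z _ => hdFee z x)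
        (fun z hz => (hbnd2 z x hz).1) hy) he
  obtain ⟨δ, hδ, hdecay⟩ := exists_pos_forall_lyapunov_deriv_le hpu hc hq hη hPnorm
    (fun x v => (hPbnd x v).2) hdPbnd hF hG hlin
  refine ⟨√(pl / pu) * δ / 2, by positivity, √(pu / pl), by positivity, q / (2 * pu) / 2,
    by positivity, fun e x t ht he => ?_⟩
  simpa [hinit] using norm_le_mul_exp_of_lyapunov (hP.differentiable one_ne_zero) hPsym hPbnd
    hpl hpu hδ (by positivity) hdecay (fun t ht => (hflow e x t ht).1)
    (fun t ht => (hflow e x t ht).2) (by simpa [hinit] using he) ht
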